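/- With H_0 = z_3(z_7 − z_3 z_4)^2 − z_5^3 and the contact Poisson bracket on R^7 (n = 3), for every nonnegative integer i: {H_0, z_3^i (z_7 − z_3 z_4)^2} = 4 z_3^i (z_7 z_5^3 − z_3 z_4 z_5^3). -/

import Mathlib

open MvPolynomial

/-- Index type for canonical coordinates on `ℝ^{2n+1}`: `Sum.inl (Sum.inl i)` is `z_i`,
`Sum.inl (Sum.inr i)` is `z_{n+i}`, and `Sum.inr ()` is the contact variable `z_{2n+1}`. -/
abbrev CIdx (n : ℕ) := (Fin n ⊕ Fin n) ⊕ Unit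

/-- The contact Poisson bracket on polynomials on `ℝ^{2n+1}` in canonical coordinates. -/
noncomputable def cbr (n : ℕ) (Φ Ψ : MvPolynomial (CIdx n) ℝ) : MvPolynomial (CIdx n) ℝ :=
  Φ * pderiv (Sum.inr ()) Ψ - Ψ * pderiv (Sum.inr ()) Φ +
  ∑ i : Fin n,
    ((pderiv (Sum.inl (Sum.inl i)) Φ +
        X (Sum.inl (Sum.inr i)) * pderiv (Sum.inr ()) Φ) * pderiv (Sum.inl (Sum.inr i)) Ψ -
     (pderiv (Sum.inl (Sum.inl i)) Ψ +
        X (Sum.inl (Sum.inr i)) * pderiv (Sum.inr ()) Ψ) * pderiv (Sum.inl (Sum.inr i)) Φ)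
/-- The coordinate `z₃ = T` on `ℝ⁷` (the third of `z₁, z₂, z₃`). -/
noncomputable def z3 : MvPolynomial (CIdx 3) ℝ := X (Sum.inl (Sum.inl 2))
/-- The coordinate `z₄` (the momentum paired with `z₁`). -/
noncomputable def z4 : MvPolynomial (CIdx 3) ℝ := X (Sum.inl (Sum.inr 0))
/-- The coordinate `z₅` (the momentum paired with `z₂`). -/
noncomputable def z5 : MvPolynomial (CIdx 3) ℝ := X (Sum.inl (Sum.inr 1))
/-- The coordinate `z₆` (the momentum paired with `z₃`). -/
noncomputable def z6 : MvPolynomial (CIdx 3) ℝ := X (Sum.inl (Sum.inr 2))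
/-- The contact coordinate `z₇ = P`. -/
noncomputable def z7 : MvPolynomial (CIdx 3) ℝ := X (Sum.inr ())

/-- The unperturbed Debye–Hückel Hamiltonian `H₀ = z₃ (z₇ − z₃ z₄)² − z₅³`. -/
noncomputable def H0 : MvPolynomial (CIdx 3) ℝ := z3 * (z7 - z3 * z4) ^ 2 - z5 ^ 3

/-! Write `w = z₇ - z₃ z₄`. Of `H₀ = z₃ w² - z₅³`, the part `z₃ w²` brackets to zero with
`z₃ⁱ w²`, both being of the form `f(z₃) w²`. The part `z₅³` is a power of a momentum, whose bracket
only sees `∂_{z₂}`, which kills `z₃ⁱ w²`, and the Reeb derivative `∂_{z₇}(z₃ⁱ w²) = 2 z₃ⁱ w`. -/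

theorem cbr_sub_left {n : ℕ} (Φ₁ Φ₂ Ψ : MvPolynomial (CIdx n) ℝ) :
    cbr n (Φ₁ - Φ₂) Ψ = cbr n Φ₁ Ψ - cbr n Φ₂ Ψ := by
  simp only [cbr, map_sub]
  rw [add_sub_add_comm, ← Finset.sum_sub_distrib]
  congr 1
  · ring
  · exact Finset.sum_congr rfl fun _ _ => by ring

theorem cbr_X_pow_succ_left {n : ℕ} (j : Fin n) (k : ℕ) (Ψ : MvPolynomial (CIdx n) ℝ) :
    cbr n (X (Sum.inl (Sum.inr j)) ^ (k + 1)) Ψ =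
      -((k : MvPolynomial (CIdx n) ℝ) * X (Sum.inl (Sum.inr j)) ^ (k + 1) *
          pderiv (Sum.inr ()) Ψ) -
        ((k : MvPolynomial (CIdx n) ℝ) + 1) * X (Sum.inl (Sum.inr j)) ^ k *
          pderiv (Sum.inl (Sum.inl j)) Ψ := by
  simp only [cbr, Derivation.leibniz_pow, add_tsub_cancel_right, pderiv_X, Pi.single_apply,
    reduceCtorEq, Sum.inl.injEq, Sum.inr.injEq, if_false, if_true, mul_ite, smul_ite, smul_eq_mul,
    nsmul_eq_mul, Nat.cast_add, Nat.cast_one, mul_zero, mul_one, zero_mul, add_zero, sub_zero,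
    zero_sub, Finset.sum_neg_distrib, Finset.sum_ite_eq, Finset.mem_univ]
  ring

/-- On functions `f(z₃) w²` the Reeb part `Φ ∂_{z₇}Ψ - Ψ ∂_{z₇}Φ` cancels by homogeneity in `w`,
the `(z₁, z₄)` part cancels because `∂_{z₁} + z₄ ∂_{z₇} = z₄ ∂_w` and `∂_{z₄} = -z₃ ∂_w` there,
and nothing depends on `z₆`. -/
theorem cbr_mul_sq_mul_sq_eq_zero (f g : MvPolynomial (CIdx 3) ℝ)
    (hf : ∀ v ≠ Sum.inl (Sum.inl 2), pderiv v f = 0)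
    (hg : ∀ v ≠ Sum.inl (Sum.inl 2), pderiv v g = 0) :
    cbr 3 (f * (z7 - z3 * z4) ^ 2) (g * (z7 - z3 * z4) ^ 2) = 0 := by
  simp only [cbr, z7, z3, z4, Fin.sum_univ_three, Derivation.leibniz, Derivation.leibniz_pow,
    map_sub, pderiv_X, Pi.single_apply, hf, hg, ne_eq, reduceCtorEq, not_false_eq_true,
    Sum.inl.injEq, Sum.inr.injEq, Fin.reduceEq, if_true, if_false, smul_eq_mul, nsmul_eq_mul]
  ring

/-- `{H₀, z₃^i (z₇ − z₃ z₄)²} = 4 z₃^i (z₇ z₅³ − z₃ z₄ z₅³)`. -/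
theorem debyeHuckel_bracket_special (i : ℕ) :
    cbr 3 H0 (z3 ^ i * (z7 - z3 * z4) ^ 2) =
      4 * z3 ^ i * (z7 * z5 ^ 3 - z3 * z4 * z5 ^ 3) := by
  have hR : pderiv (Sum.inr ()) (z3 ^ i * (z7 - z3 * z4) ^ 2) = 2 * z3 ^ i * (z7 - z3 * z4) := by
    simp only [z3, z4, z7, Derivation.leibniz, Derivation.leibniz_pow, Nat.add_one_sub_one,
      pow_one, map_sub, pderiv_X, Pi.single_eq_same, ne_eq, reduceCtorEq, not_false_eq_true,
      Pi.single_eq_of_ne, smul_eq_mul, nsmul_eq_mul, Nat.cast_ofNat, mul_zero,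
      add_zero, sub_zero, mul_one]
    ring
  have hq : pderiv (Sum.inl (Sum.inl 1)) (z3 ^ i * (z7 - z3 * z4) ^ 2) = 0 := by
    simp [Derivation.leibniz, Derivation.leibniz_pow, z3, z4, z7]
  have hz3 : cbr 3 (z3 * (z7 - z3 * z4) ^ 2) (z3 ^ i * (z7 - z3 * z4) ^ 2) = 0 :=
    cbr_mul_sq_mul_sq_eq_zero z3 (z3 ^ i) (fun _ hv => pderiv_X_of_ne hv.symm)
      (fun _ hv => by simp [z3, Derivation.leibniz_pow, pderiv_X_of_ne hv.symm])
  rw [H0, cbr_sub_left, hz3, z5, cbr_X_pow_succ_left, hR, hq]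
  ring
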